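/- arXiv:2502.02859 — 4 statements merged into one kernel-verified Lean document; each statement's English description precedes it below -/
import Mathlib

section
/- Let H be a positive integer and define the learning rate η_t = (H+1)/(H+t) for t ≥ 1. For any fixed t ≥ 1, define the weights η_t^i = η_t · ∏_{j=t+1}^{i} (1 - η_j) for i ≥ t (with the empty product equal to 1). Then the infinite series ∑_{i=t}^{∞} η_t^i converges and equals 1 + 1/H. -/
theorem stmt0 (H : ℕ) (hH : 1 ≤ H)
    (η : ℕ → ℝ) (hη : ∀ t, η t = ((H : ℝ) + 1) / ((H : ℝ) + t))
    (w : ℕ → ℕ → ℝ)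
    (hw : ∀ t i, w t i = η t * ∏ j ∈ Finset.Icc (t + 1) i, (1 - η j)) :
    ∀ t, 1 ≤ t → HasSum (fun n : ℕ => w t (t + n)) (1 + 1 / (H : ℝ)) := by
  intro t ht
  have hHr : (1:ℝ) ≤ (H:ℝ) := by exact_mod_cast hH
  have htr : (1:ℝ) ≤ (t:ℝ) := by exact_mod_cast ht
  set Hr := (H:ℝ) with hHdef
  set tr := (t:ℝ) with htdef
  have hHp : (0:ℝ) < Hr := by linarith
  have htp : (0:ℝ) < tr := by linarith
  set p : ℕ → ℝ := fun N => ∏ k ∈ Finset.range N, (tr + k) / (Hr + tr + k) with hp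
  have hpnn : ∀ N, 0 ≤ p N := by
    intro N
    apply Finset.prod_nonneg
    intro k _
    have hk : (0:ℝ) ≤ (k:ℝ) := Nat.cast_nonneg k
    apply div_nonneg <;> linarith
  -- closed form for w t (t+N)
  have key : ∀ N : ℕ, w t (t + N) = (1 + 1 / Hr) * (Hr / (Hr + tr + N)) * p N := by
    intro N
    induction N with
    | zero =>
      have he : Finset.Icc (t + 1) (t + 0) = ∅ := Finset.Icc_eq_empty (by omega)
      rw [hw, he, Finset.prod_empty, hη]
      simp only [hp, Finset.range_zero, Finset.prod_empty, Nat.cast_zero]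
      have h1 : Hr + tr ≠ 0 := by linarith
      have h2 : Hr ≠ 0 := by linarith
      rw [htdef]
      field_simp
      ring
    | succ N ih =>
      have hle : t + 1 ≤ t + N + 1 := by omega
      have hstep : w t (t + (N + 1)) = w t (t + N) * (1 - η (t + N + 1)) := by
        rw [hw, hw]
        have : t + (N + 1) = (t + N) + 1 := by omega
        rw [this, Finset.prod_Icc_succ_top hle, mul_assoc]
      rw [hstep, ih, hη]
      have hcast : ((t + N + 1 : ℕ) : ℝ) = tr + N + 1 := by push_cast; ring
      rw [hcast]
      have hq : p (N + 1) = p N * ((tr + N) / (Hr + tr + N)) :=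
        Finset.prod_range_succ (fun k => (tr + k) / (Hr + tr + k)) N
      rw [hq]
      have hN : (0:ℝ) ≤ (N:ℝ) := Nat.cast_nonneg N
      have hcast2 : ((N + 1 : ℕ) : ℝ) = (N:ℝ) + 1 := by push_cast; ring
      rw [hcast2]
      have d1 : Hr + tr + N ≠ 0 := by linarith
      have d2 : Hr + tr + ((N:ℝ) + 1) ≠ 0 := by linarith
      have d3 : Hr + (tr + N + 1) ≠ 0 := by linarith
      have d4 : Hr ≠ 0 := by linarith
      field_simp
      ring
  -- partial sums
  have psum : ∀ N : ℕ, ∑ n ∈ Finset.range N, w t (t + n) = (1 + 1 / Hr) * (1 - p N) := by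
    intro N
    induction N with
    | zero => simp [hp]
    | succ N ih =>
      rw [Finset.sum_range_succ, ih, key N]
      have hq : p (N + 1) = p N * ((tr + N) / (Hr + tr + N)) :=
        Finset.prod_range_succ (fun k => (tr + k) / (Hr + tr + k)) N
      rw [hq]
      have hN : (0:ℝ) ≤ (N:ℝ) := Nat.cast_nonneg N
      have d1 : Hr + tr + N ≠ 0 := by linarith
      have d4 : Hr ≠ 0 := by linarith
      field_simp
      ring
  -- bound p N ≤ tr / (tr + N)
  have hbound : ∀ N : ℕ, p N ≤ tr / (tr + N) := by
    intro N
    induction N with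
    | zero => simp [hp, div_self htp.ne']
    | succ N ih =>
      have hN : (0:ℝ) ≤ (N:ℝ) := Nat.cast_nonneg N
      have hq : p (N + 1) = p N * ((tr + N) / (Hr + tr + N)) :=
        Finset.prod_range_succ (fun k => (tr + k) / (Hr + tr + k)) N
      rw [hq]
      have h1 : (tr + N) / (Hr + tr + N) ≤ (tr + N) / (tr + N + 1) := by
        apply div_le_div_of_nonneg_left (by linarith) (by linarith) (by linarith)
      have h2 : (0:ℝ) ≤ (tr + N) / (Hr + tr + N) := by
        apply div_nonneg <;> linarith
      have h3 : (0:ℝ) ≤ tr / (tr + N) := by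
        apply div_nonneg <;> linarith
      calc p N * ((tr + N) / (Hr + tr + N))
          ≤ (tr / (tr + N)) * ((tr + N) / (tr + N + 1)) :=
            mul_le_mul ih h1 h2 h3
        _ = tr / (tr + ((N:ℝ) + 1)) := by
            have h4 : tr + N ≠ 0 := by linarith
            have h5 : tr + N + 1 ≠ 0 := by linarith
            field_simp
            ring
        _ = tr / (tr + ((N + 1 : ℕ) : ℝ)) := by push_cast; ring_nf
  -- p N tends to 0
  have hp0 : Filter.Tendsto p Filter.atTop (nhds 0) := by
    apply squeeze_zero hpnn hbound
    apply Filter.Tendsto.div_atTop (tendsto_const_nhds)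
    apply Filter.tendsto_atTop_add_const_left
    exact tendsto_natCast_atTop_atTop
  -- nonnegativity of terms
  have hnn : ∀ n : ℕ, 0 ≤ w t (t + n) := by
    intro n
    rw [key n]
    have hN : (0:ℝ) ≤ (n:ℝ) := Nat.cast_nonneg n
    have := hpnn n
    have h1 : (0:ℝ) ≤ 1 + 1 / Hr := by positivity
    have h2 : (0:ℝ) ≤ Hr / (Hr + tr + n) := by
      apply div_nonneg <;> linarith
    positivity
  rw [hasSum_iff_tendsto_nat_of_nonneg hnn]
  have := (tendsto_const_nhds (x := (1 + 1 / Hr))).mul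
    ((tendsto_const_nhds (x := (1:ℝ))).sub hp0)
  have hlim : Filter.Tendsto (fun N => (1 + 1 / Hr) * (1 - p N)) Filter.atTop
      (nhds (1 + 1 / Hr)) := by
    simpa using this
  exact hlim.congr (fun N => (psum N).symm)
end

section
/- Let H be a positive integer and η_t = (H+1)/(H+t) for t ≥ 1, and η_i^t = η_i · ∏_{j=i+1}^{t}(1-η_j). Then for every t ≥ 1: 1/√t ≤ ∑_{i=1}^{t} η_i^t/√i ≤ 2/√t. -/
theorem stmt2 (H : ℕ) (hH : 1 ≤ H)
    (η : ℕ → ℝ) (hη : ∀ t, η t = ((H : ℝ) + 1) / ((H : ℝ) + t)) :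
    ∀ t : ℕ, 1 ≤ t →
      1 / Real.sqrt t ≤
          ∑ i ∈ Finset.Icc 1 t,
            (η i * ∏ j ∈ Finset.Icc (i + 1) t, (1 - η j)) / Real.sqrt i ∧
      ∑ i ∈ Finset.Icc 1 t,
          (η i * ∏ j ∈ Finset.Icc (i + 1) t, (1 - η j)) / Real.sqrt i ≤
        2 / Real.sqrt t := by
  intro t ht
  induction t with
  | zero => omega
  | succ n ih =>
    rcases Nat.eq_zero_or_pos n with hn | hn
    · subst hn
      have h1 : η 1 = 1 := by rw [hη]; push_cast; field_simp
      simp [h1, Finset.Icc_self, Real.sqrt_one]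
    · have ihn := ih hn
      push_cast
      -- recurrence
      have key : ∑ i ∈ Finset.Icc 1 (n+1), (η i * ∏ j ∈ Finset.Icc (i+1) (n+1), (1 - η j)) / Real.sqrt i
          = (1 - η (n+1)) * (∑ i ∈ Finset.Icc 1 n, (η i * ∏ j ∈ Finset.Icc (i+1) n, (1 - η j)) / Real.sqrt i) + η (n+1) / Real.sqrt ((n:ℝ)+1) := by
        rw [Finset.sum_Icc_succ_top (by omega : 1 ≤ n+1), Finset.mul_sum]
        congr 1
        · apply Finset.sum_congr rfl
          intro i hi
          simp only [Finset.mem_Icc] at hi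
          rw [Finset.prod_Icc_succ_top (by omega : i+1 ≤ n+1)]
          ring
        · rw [show n+1+1 = n+2 from rfl, Finset.Icc_eq_empty (by omega), Finset.prod_empty, mul_one]
          norm_cast
      rw [key]
      set a := ∑ i ∈ Finset.Icc 1 n, (η i * ∏ j ∈ Finset.Icc (i+1) n, (1 - η j)) / Real.sqrt i with ha
      obtain ⟨hlo, hhi⟩ := ihn
      set sn := Real.sqrt n with hsn
      set sn1 := Real.sqrt (n+1) with hsn1
      have hnn : (1:ℝ) ≤ (n:ℝ) := by exact_mod_cast hn
      have hsn_pos : 0 < sn := Real.sqrt_pos.2 (by linarith)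
      have hsn1_pos : 0 < sn1 := Real.sqrt_pos.2 (by positivity)
      have hsn_sq : sn ^ 2 = (n:ℝ) := Real.sq_sqrt (by linarith)
      have hsn1_sq : sn1 ^ 2 = (n:ℝ) + 1 := by
        rw [hsn1]
        push_cast
        exact Real.sq_sqrt (by linarith)
      have hle : sn ≤ sn1 := by
        rw [hsn, hsn1]
        apply Real.sqrt_le_sqrt
        push_cast; linarith
      have hprod : 2 * (sn * sn1) ≤ 2 * (n:ℝ) + 1 := by nlinarith [sq_nonneg (sn - sn1)]
      have he : η (n+1) = ((H:ℝ)+1) / ((H:ℝ)+n+1) := by rw [hη]; push_cast; ring_nf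
      have hD : (0:ℝ) < (H:ℝ)+n+1 := by positivity
      have hHpos : (1:ℝ) ≤ (H:ℝ) := by exact_mod_cast hH
      have he_pos : 0 < η (n+1) := by rw [he]; positivity
      have he_lt : η (n+1) ≤ 1 := by
        rw [he, div_le_one hD]; linarith
      have h1e : 1 - η (n+1) = (n:ℝ) / ((H:ℝ)+n+1) := by
        rw [he]; field_simp; ring
      have hsn_ne : sn ≠ 0 := ne_of_gt hsn_pos
      have hsn1_ne : sn1 ≠ 0 := ne_of_gt hsn1_pos
      have hD_ne : (H:ℝ)+(n:ℝ)+1 ≠ 0 := ne_of_gt hD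
      have hinv : 1 / sn1 ≤ 1 / sn := one_div_le_one_div_of_le hsn_pos hle
      constructor
      · have step : 1 / sn1 ≤ (1 - η (n+1)) * (1 / sn) + η (n+1) / sn1 := by
          have : 1 / sn1 = (1 - η (n+1)) * (1 / sn1) + η (n+1) * (1 / sn1) := by ring
          rw [this]
          have h2 : (1 - η (n+1)) * (1 / sn1) ≤ (1 - η (n+1)) * (1 / sn) :=
            mul_le_mul_of_nonneg_left hinv (by linarith)
          have h3 : η (n+1) * (1 / sn1) = η (n+1) / sn1 := by ring
          linarith
        have := mul_le_mul_of_nonneg_left hlo (by linarith : 0 ≤ 1 - η (n+1))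
        linarith
      · have hkey : 2*(n:ℝ)*sn1 ≤ ((H:ℝ)+2*(n:ℝ)+1)*sn := by
          nlinarith [mul_le_mul_of_nonneg_right hprod (le_of_lt hsn_pos), hsn_sq,
            mul_nonneg (by positivity : (0:ℝ) ≤ (H:ℝ)) (le_of_lt hsn_pos)]
        have step : (1 - η (n+1)) * (2 / sn) + η (n+1) / sn1 ≤ 2 / sn1 := by
          rw [h1e, he]
          have e1 : (n:ℝ)/((H:ℝ)+(n:ℝ)+1) * (2/sn) + ((H:ℝ)+1)/((H:ℝ)+(n:ℝ)+1)/sn1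
              = (2*(n:ℝ)*sn1 + ((H:ℝ)+1)*sn) / (((H:ℝ)+(n:ℝ)+1)*(sn*sn1)) := by
            field_simp
          have e2 : (2:ℝ)/sn1 = (2*((H:ℝ)+(n:ℝ)+1)*sn) / (((H:ℝ)+(n:ℝ)+1)*(sn*sn1)) := by
            field_simp
          rw [e1, e2]
          apply div_le_div_of_nonneg_right ?_ (by positivity)
          nlinarith [mul_nonneg (by positivity : (0:ℝ) ≤ (H:ℝ)+1) (le_of_lt hsn_pos)]
        have := mul_le_mul_of_nonneg_left hhi (by linarith : 0 ≤ 1 - η (n+1))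
        linarith
end

section
/- Let H ≥ 1 be an integer, η_t = (H+1)/(H+t), and suppose integers N ≥ 2H(H+1) and i satisfy N < i ≤ N + N/(H(H+1)). Then ∏_{q=N+1}^{i} (1 - η_q)^{-1} ≤ e^{1/H}. -/
theorem stmt8 (H N i : ℕ) (hH : 1 ≤ H)
    (η : ℕ → ℝ) (hη : ∀ t, η t = ((H : ℝ) + 1) / ((H : ℝ) + t))
    (hN : 2 * H * (H + 1) ≤ N) (hNi : N < i)
    (hi : (i : ℝ) ≤ (N : ℝ) + (N : ℝ) / ((H : ℝ) * ((H : ℝ) + 1))) :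
    ∏ q ∈ Finset.Icc (N + 1) i, (1 - η q)⁻¹ ≤ Real.exp (1 / (H : ℝ)) := by
  have hH0 : (0:ℝ) < H := by exact_mod_cast hH
  have hN0 : 0 < N := lt_of_lt_of_le (by positivity) hN
  have hNr : (0:ℝ) < N := by exact_mod_cast hN0
  -- bound each factor
  have key : ∀ q ∈ Finset.Icc (N + 1) i,
      (1 - η q)⁻¹ ≤ Real.exp (((H:ℝ)+1)/N) := by
    intro q hq
    rw [Finset.mem_Icc] at hq
    have hqN : (N:ℝ) + 1 ≤ q := by exact_mod_cast hq.1
    have hq1 : (0:ℝ) < (q:ℝ) - 1 := by linarith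
    have hHq : (0:ℝ) < (H:ℝ) + q := by positivity
    have heq : 1 - η q = ((q:ℝ) - 1) / ((H:ℝ) + q) := by
      rw [hη]; field_simp; ring
    have hpos : 0 < 1 - η q := by rw [heq]; positivity
    have hinv : (1 - η q)⁻¹ = 1 + ((H:ℝ)+1)/((q:ℝ)-1) := by
      rw [heq, inv_div]; field_simp; ring
    have h1 : ((H:ℝ)+1)/((q:ℝ)-1) ≤ ((H:ℝ)+1)/N := by
      apply div_le_div_of_nonneg_left (by positivity) hNr (by linarith)
    calc (1 - η q)⁻¹ = 1 + ((H:ℝ)+1)/((q:ℝ)-1) := hinv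
      _ ≤ 1 + ((H:ℝ)+1)/N := by linarith
      _ ≤ Real.exp (((H:ℝ)+1)/N) := by
          have := Real.add_one_le_exp (((H:ℝ)+1)/N)
          linarith
  have hnonneg : ∀ q ∈ Finset.Icc (N + 1) i, 0 ≤ (1 - η q)⁻¹ := by
    intro q hq
    rw [Finset.mem_Icc] at hq
    have hqN : (N:ℝ) + 1 ≤ q := by exact_mod_cast hq.1
    have hq1 : (0:ℝ) < (q:ℝ) - 1 := by linarith
    have : 1 - η q = ((q:ℝ) - 1) / ((H:ℝ) + q) := by rw [hη]; field_simp; ring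
    rw [this]
    positivity
  calc ∏ q ∈ Finset.Icc (N + 1) i, (1 - η q)⁻¹
      ≤ ∏ q ∈ Finset.Icc (N + 1) i, Real.exp (((H:ℝ)+1)/N) :=
        Finset.prod_le_prod hnonneg key
    _ = Real.exp (((H:ℝ)+1)/N) ^ (i - N) := by
        rw [Finset.prod_const, Nat.card_Icc]
        congr 1
        omega
    _ = Real.exp ((i - N : ℕ) * (((H:ℝ)+1)/N)) := by
        rw [← Real.exp_nat_mul]
    _ ≤ Real.exp (1 / (H : ℝ)) := by
        rw [Real.exp_le_exp]
        have hcast : ((i - N : ℕ) : ℝ) = (i:ℝ) - N := by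
          have : N ≤ i := le_of_lt hNi
          push_cast [Nat.cast_sub this]
          ring
        rw [hcast]
        have h1 : (i:ℝ) - N ≤ (N:ℝ) / ((H:ℝ) * ((H:ℝ) + 1)) := by linarith
        have h2 : ((i:ℝ) - N) * (((H:ℝ)+1)/N)
            ≤ ((N:ℝ) / ((H:ℝ) * ((H:ℝ) + 1))) * (((H:ℝ)+1)/N) := by
          apply mul_le_mul_of_nonneg_right h1 (by positivity)
        have h3 : ((N:ℝ) / ((H:ℝ) * ((H:ℝ) + 1))) * (((H:ℝ)+1)/N) = 1 / H := by
          field_simp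
        linarith
end

section
/- Let (P_h)_{h} and (P*_h)_{h} be two sequences of probability distributions on a finite state space S evolving under possibly different Markov transition dynamics, namely P_{h+1}(s) = ∑_{s'} T_h(s | s') μ_h(s') + e_{h+1}(s) and P*_{h+1}(s) = ∑_{s'} T_h(s | s') P*_h(s'), where μ_h(s') = P_h(s') − ε_h(s') with ε_h(s') ≥ 0, ∑_{s'} ε_h(s') = ∑_s e_{h+1}(s) =: δ_h, and T_h(·|s') is a stochastic kernel. If P_1 = P*_1, then for every h' ≥ 1, ∑_{s ∈ S} |P_{h'}(s) − P*_{h'}(s)| ≤ 2 ∑_{h=1}^{h'-1} δ_h. -/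
theorem stmt17 {S : Type*} [Fintype S]
    (P Pstar : ℕ → S → ℝ) (T : ℕ → S → S → ℝ) (ε e : ℕ → S → ℝ) (δ : ℕ → ℝ)
    (hTnn : ∀ h s s', 0 ≤ T h s s')
    (hTsum : ∀ h s', ∑ s, T h s s' = 1)
    (hεnn : ∀ h s, 0 ≤ ε h s)
    (henn : ∀ h s, 0 ≤ e h s)
    (hεsum : ∀ h, ∑ s, ε h s = δ h)
    (hesum : ∀ h, ∑ s, e (h + 1) s = δ h)
    (hP : ∀ h s, P (h + 1) s = (∑ s', T h s s' * (P h s' - ε h s')) + e (h + 1) s)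
    (hPstar : ∀ h s, Pstar (h + 1) s = ∑ s', T h s s' * Pstar h s')
    (hinit : P 1 = Pstar 1) :
    ∀ h', 1 ≤ h' →
      ∑ s, |P h' s - Pstar h' s| ≤ 2 * ∑ h ∈ Finset.Icc 1 (h' - 1), δ h := by
  intro h' hh'
  induction h', hh' using Nat.le_induction with
  | base => simp [hinit]
  | succ n hn ih =>
    have key : ∑ s, |P (n+1) s - Pstar (n+1) s|
        ≤ ∑ s, |P n s - Pstar n s| + 2 * δ n := by
      have step : ∀ s, |P (n+1) s - Pstar (n+1) s|
          ≤ (∑ s', T n s s' * |P n s' - Pstar n s'|)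
            + (∑ s', T n s s' * ε n s') + e (n+1) s := by
        intro s
        rw [hP, hPstar]
        have heq : (∑ s', T n s s' * (P n s' - ε n s')) + e (n + 1) s
              - ∑ s', T n s s' * Pstar n s'
            = (∑ s', T n s s' * (P n s' - Pstar n s'))
              - (∑ s', T n s s' * ε n s') + e (n+1) s := by
          rw [← Finset.sum_sub_distrib]
          have h2 : ∑ s', (T n s s' * (P n s' - Pstar n s') - T n s s' * ε n s')
              = ∑ s', (T n s s' * (P n s' - ε n s') - T n s s' * Pstar n s') :=
            Finset.sum_congr rfl (fun x _ => by ring)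
          rw [h2, Finset.sum_sub_distrib]
          ring
        rw [heq]
        have h1 : |(∑ s', T n s s' * (P n s' - Pstar n s'))|
            ≤ ∑ s', T n s s' * |P n s' - Pstar n s'| := by
          refine (Finset.abs_sum_le_sum_abs _ _).trans ?_
          apply Finset.sum_le_sum
          intro s' _
          rw [abs_mul, abs_of_nonneg (hTnn n s s')]
        calc |(∑ s', T n s s' * (P n s' - Pstar n s'))
              - (∑ s', T n s s' * ε n s') + e (n+1) s|
            ≤ |(∑ s', T n s s' * (P n s' - Pstar n s'))
              - (∑ s', T n s s' * ε n s')| + |e (n+1) s| := abs_add_le _ _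
          _ ≤ |(∑ s', T n s s' * (P n s' - Pstar n s'))|
              + |(∑ s', T n s s' * ε n s')| + |e (n+1) s| := by
              gcongr; exact abs_sub _ _
          _ ≤ (∑ s', T n s s' * |P n s' - Pstar n s'|)
              + (∑ s', T n s s' * ε n s') + e (n+1) s := by
              gcongr
              · exact le_of_eq (abs_of_nonneg (Finset.sum_nonneg
                  fun s' _ => mul_nonneg (hTnn _ _ _) (hεnn _ _)))
              · exact le_of_eq (abs_of_nonneg (henn _ _))
      have hA : ∑ s, ∑ s', T n s s' * |P n s' - Pstar n s'|
          = ∑ s', |P n s' - Pstar n s'| := by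
        rw [Finset.sum_comm]
        exact Finset.sum_congr rfl fun s' _ => by
          rw [← Finset.sum_mul, hTsum, one_mul]
      have hB : ∑ s, ∑ s', T n s s' * ε n s' = δ n := by
        rw [Finset.sum_comm, ← hεsum n]
        exact Finset.sum_congr rfl fun s' _ => by
          rw [← Finset.sum_mul, hTsum, one_mul]
      calc ∑ s, |P (n+1) s - Pstar (n+1) s|
          ≤ ∑ s, ((∑ s', T n s s' * |P n s' - Pstar n s'|)
              + (∑ s', T n s s' * ε n s') + e (n+1) s) :=
            Finset.sum_le_sum fun s _ => step s
        _ = ∑ s, |P n s - Pstar n s| + 2 * δ n := by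
            rw [Finset.sum_add_distrib, Finset.sum_add_distrib, hesum, hA, hB]
            ring
    have hIcc : Finset.Icc 1 ((n+1) - 1) = insert n (Finset.Icc 1 (n - 1)) := by
      ext x
      simp only [Finset.mem_Icc, Finset.mem_insert]
      omega
    have hnotmem : n ∉ Finset.Icc 1 (n - 1) := by
      simp only [Finset.mem_Icc]
      omega
    rw [hIcc, Finset.sum_insert hnotmem]
    calc ∑ s, |P (n+1) s - Pstar (n+1) s|
        ≤ ∑ s, |P n s - Pstar n s| + 2 * δ n := key
      _ ≤ 2 * ∑ h ∈ Finset.Icc 1 (n - 1), δ h + 2 * δ n := by linarith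
      _ = 2 * (δ n + ∑ h ∈ Finset.Icc 1 (n - 1), δ h) := by ring
end
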